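/- arXiv:1607.00427 — 4 statements merged into one kernel-verified Lean document; each statement's English description precedes it below -/
import Mathlib

section
/- Let $T_\ell$ be the Chebyshev polynomials of the first kind ($T_0(x)=1$, $T_1(x)=x$, $T_{\ell+1}(x)=2xT_\ell(x)-T_{\ell-1}(x)$) and let $P_\ell$ be defined by $P_0=0$, $P_1=P_2=1$, $P_{2j+1}(t)=tP_{2j}(t)-P_{2j-1}(t)$, $P_{2j+2}(t)=P_{2j+1}(t)-P_{2j}(t)$. Then for every $j\ge 0$ and all real $x$: $T_{2j+1}(x)=1+(x-1)\,P_{2j+1}(2x+2)^2$. -/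
theorem stmt3 (T : ℕ → ℝ → ℝ)
    (hT0 : ∀ x : ℝ, T 0 x = 1) (hT1 : ∀ x : ℝ, T 1 x = x)
    (hTrec : ∀ (n : ℕ) (x : ℝ), T (n+2) x = 2*x*T (n+1) x - T n x)
    (P : ℕ → ℝ → ℝ)
    (hP0 : ∀ t : ℝ, P 0 t = 0) (hP1 : ∀ t : ℝ, P 1 t = 1) (hP2 : ∀ t : ℝ, P 2 t = 1)
    (hodd : ∀ j : ℕ, 1 ≤ j → ∀ t : ℝ, P (2*j+1) t = t * P (2*j) t - P (2*j-1) t)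
    (heven : ∀ j : ℕ, 1 ≤ j → ∀ t : ℝ, P (2*j+2) t = P (2*j+1) t - P (2*j) t) :
    ∀ (j : ℕ) (x : ℝ), T (2*j+1) x = 1 + (x-1) * (P (2*j+1) (2*x+2))^2 := by
  intro j x
  set t : ℝ := 2*x+2 with ht
  -- P 3
  have hP3 : P 3 t = 2*x+1 := by
    have h := hodd 1 le_rfl t
    norm_num at h
    rw [h, hP2, hP1, ht]; ring
  -- three-term recurrence for odd-index P's
  have harec : ∀ k : ℕ, P (2*k+5) t = 2*x * P (2*k+3) t - P (2*k+1) t := by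
    intro k
    have h1 := hodd (k+2) (by omega) t
    have h2 := heven (k+1) (by omega) t
    have h3 := hodd (k+1) (by omega) t
    have e1 : 2*(k+2)+1 = 2*k+5 := by omega
    have e2 : 2*(k+2)-1 = 2*k+3 := by omega
    have e3 : 2*(k+2) = 2*k+4 := by omega
    have e4 : 2*(k+1)+2 = 2*k+4 := by omega
    have e5 : 2*(k+1)+1 = 2*k+3 := by omega
    have e6 : 2*(k+1) = 2*k+2 := by omega
    have e7 : 2*(k+1)-1 = 2*k+1 := by omega
    rw [e1, e2, e3] at h1
    rw [e4, e5, e6] at h2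
    rw [e5, e7, e6] at h3
    rw [h1, h2]
    linear_combination h3 + P (2*k+3) t * ht
  -- invariant
  have hd : ∀ k : ℕ, P (2*k+3) t ^ 2 + P (2*k+1) t ^ 2
      - 2*x * (P (2*k+3) t * P (2*k+1) t) = 2*x+2 := by
    intro k
    induction k with
    | zero =>
      norm_num
      rw [hP3, hP1]; ring
    | succ n ih =>
      have e1 : 2*(n+1)+3 = 2*n+5 := by omega
      have e2 : 2*(n+1)+1 = 2*n+3 := by omega
      rw [e1, e2, harec n]
      linear_combination ih
  -- two-step recurrence for T
  have hT2 : ∀ n : ℕ, T (n+4) x = (4*x^2-2) * T (n+2) x - T n x := by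
    intro n
    have h1 := hTrec (n+2) x
    have h2 := hTrec (n+1) x
    have e1 : n+2+2 = n+4 := by omega
    have e2 : n+1+2 = n+3 := by omega
    have e3 : n+1+1 = n+2 := by omega
    have e4 : n+2+1 = n+3 := by omega
    rw [e1, e4] at h1
    rw [e2, e3] at h2
    rw [h1, h2]
    linear_combination hTrec n x
  -- main two-step induction
  have main : ∀ k : ℕ, T (2*k+1) x = 1 + (x-1) * (P (2*k+1) t)^2 ∧
      T (2*k+3) x = 1 + (x-1) * (P (2*k+3) t)^2 := by
    intro k
    induction k with
    | zero =>
      norm_num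
      constructor
      · rw [hT1, hP1]; ring
      · have h2 := hTrec 0 x
        have h3 := hTrec 1 x
        norm_num at h2 h3
        rw [h3, h2, hT1, hT0, hP3]; ring
    | succ n ih =>
      have e1 : 2*(n+1)+1 = 2*n+3 := by omega
      have e2 : 2*(n+1)+3 = 2*n+5 := by omega
      rw [e1, e2]
      refine ⟨ih.2, ?_⟩
      have h := hT2 (2*n+1)
      have e3 : 2*n+1+4 = 2*n+5 := by omega
      have e4 : 2*n+1+2 = 2*n+3 := by omega
      rw [e3, e4] at h
      rw [h, ih.1, ih.2, harec n]
      linear_combination (-2*(x-1)) * hd n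
  exact (main j).1
end

section
/- Let $T_\ell$ be the Chebyshev polynomials of the first kind and $P_\ell$ the polynomials with $P_0=0$, $P_1=P_2=1$, $P_{2j+1}(t)=tP_{2j}(t)-P_{2j-1}(t)$, $P_{2j+2}(t)=P_{2j+1}(t)-P_{2j}(t)$. Then for every $j\ge 0$ and all real $x$: $T_{2j+2}(x)=1+(2x^2-2)\,P_{2j+2}(2x+2)^2$. -/
/-!
Substituting `t = 2x + 2` turns the interlaced recurrence for `P` into that of the Chebyshev
polynomials of the second kind: `P_{2j+2}(2x+2) = U_j(x)` and `P_{2j+3}(2x+2) = U_{j+1}(x) + U_j(x)`.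
The identity is then `T_{2j+2} = 2 T_{j+1}² - 1` with `T_{j+1} = U_{j+1} - X U_j`, simplified by
the Pell-type identity `U_j² + U_{j+1}² - 2 X U_j U_{j+1} = 1`.
-/

open Polynomial Polynomial.Chebyshev

namespace Polynomial.Chebyshev

variable (R : Type*) [CommRing R]

theorem U_sq_add_U_sq (n : ℤ) :
    U R n ^ 2 + U R (n + 1) ^ 2 - 2 * X * U R n * U R (n + 1) = 1 := by
  have h := congrArg (·.comp (2 * X)) (S_sq_add_S_sq R n)
  simp only [sub_comp, add_comp, mul_comp, pow_comp, X_comp, one_comp, S_comp_two_mul_X] at h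
  linear_combination h

theorem T_two_mul_add_two (n : ℤ) : T R (2 * n + 2) = 1 + (2 * X ^ 2 - 2) * U R n ^ 2 := by
  have hT := T_mul_T R (n + 1) (n + 1)
  rw [sub_self, T_zero, T_eq_U_sub_X_mul_U, add_sub_cancel_right] at hT
  linear_combination (norm := ring_nf) -hT + 2 * U_sq_add_U_sq R n

end Polynomial.Chebyshev

theorem eq_eval_chebyshevT {R : Type*} [CommRing R] {f : ℕ → R → R}
    (h0 : ∀ x, f 0 x = 1) (h1 : ∀ x, f 1 x = x)
    (hrec : ∀ n x, f (n + 2) x = 2 * x * f (n + 1) x - f n x) (n : ℕ) (x : R) :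
    f n x = (T R n).eval x := by
  induction n using Nat.twoStepInduction with
  | zero => simp [h0]
  | one => simp [h1]
  | more n ih0 ih1 =>
    rw [hrec, ih0, ih1, show ((n + 2 : ℕ) : ℤ) = n + 2 by push_cast; ring, T_add_two]
    push_cast
    simp

theorem even_odd_eq_eval_chebyshevU {R : Type*} [CommRing R] {P : ℕ → R → R}
    (h1 : ∀ t, P 1 t = 1) (h2 : ∀ t, P 2 t = 1)
    (hodd : ∀ j t, P (2 * j + 3) t = t * P (2 * j + 2) t - P (2 * j + 1) t)
    (heven : ∀ j t, P (2 * j + 4) t = P (2 * j + 3) t - P (2 * j + 2) t) (j : ℕ) (x : R) :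
    P (2 * j + 2) (2 * x + 2) = (U R j).eval x ∧
      P (2 * j + 3) (2 * x + 2) = (U R (j + 1)).eval x + (U R j).eval x := by
  induction j with
  | zero =>
    have h3 := hodd 0 (2 * x + 2)
    simp only [mul_zero, zero_add] at h3 ⊢
    simp only [h3, h2, h1, Nat.cast_zero, zero_add, U_zero, U_one, eval_one, eval_mul, eval_ofNat,
      eval_X, true_and]
    ring
  | succ j ih =>
    obtain ⟨ih_even, ih_odd⟩ := ih
    push_cast
    have h_even : P (2 * (j + 1) + 2) (2 * x + 2) = (U R (j + 1)).eval x := by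
      rw [show 2 * (j + 1) + 2 = 2 * j + 4 by ring, heven, ih_odd, ih_even, add_sub_cancel_right]
    have h_odd := hodd (j + 1) (2 * x + 2)
    rw [h_even, show 2 * (j + 1) + 1 = 2 * j + 3 by ring, ih_odd] at h_odd
    refine ⟨h_even, ?_⟩
    rw [h_odd, show (j : ℤ) + 1 + 1 = j + 2 by ring, U_add_two]
    simp only [eval_sub, eval_mul, eval_ofNat, eval_X]
    ring

theorem stmt4_general (T : ℕ → ℝ → ℝ)
    (hT0 : ∀ x : ℝ, T 0 x = 1) (hT1 : ∀ x : ℝ, T 1 x = x)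
    (hTrec : ∀ (n : ℕ) (x : ℝ), T (n+2) x = 2*x*T (n+1) x - T n x)
    (P : ℕ → ℝ → ℝ)
    (hP1 : ∀ t : ℝ, P 1 t = 1) (hP2 : ∀ t : ℝ, P 2 t = 1)
    (hodd : ∀ j : ℕ, 1 ≤ j → ∀ t : ℝ, P (2*j+1) t = t * P (2*j) t - P (2*j-1) t)
    (heven : ∀ j : ℕ, 1 ≤ j → ∀ t : ℝ, P (2*j+2) t = P (2*j+1) t - P (2*j) t) :
    ∀ (j : ℕ) (x : ℝ), T (2*j+2) x = 1 + (2*x^2-2) * (P (2*j+2) (2*x+2))^2 := by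
  intro j x
  have hodd' (j : ℕ) (t : ℝ) : P (2 * j + 3) t = t * P (2 * j + 2) t - P (2 * j + 1) t := by
    have h := hodd (j + 1) j.succ_pos t
    rwa [show 2 * (j + 1) - 1 = 2 * j + 1 by omega] at h
  have heven' (j : ℕ) (t : ℝ) : P (2 * j + 4) t = P (2 * j + 3) t - P (2 * j + 2) t :=
    heven (j + 1) j.succ_pos t
  rw [eq_eval_chebyshevT hT0 hT1 hTrec, (even_odd_eq_eval_chebyshevU hP1 hP2 hodd' heven' j x).1]
  simpa using congrArg (eval x) (T_two_mul_add_two ℝ j)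

theorem stmt4 (T : ℕ → ℝ → ℝ)
    (hT0 : ∀ x : ℝ, T 0 x = 1) (hT1 : ∀ x : ℝ, T 1 x = x)
    (hTrec : ∀ (n : ℕ) (x : ℝ), T (n+2) x = 2*x*T (n+1) x - T n x)
    (P : ℕ → ℝ → ℝ)
    (hP0 : ∀ t : ℝ, P 0 t = 0) (hP1 : ∀ t : ℝ, P 1 t = 1) (hP2 : ∀ t : ℝ, P 2 t = 1)
    (hodd : ∀ j : ℕ, 1 ≤ j → ∀ t : ℝ, P (2*j+1) t = t * P (2*j) t - P (2*j-1) t)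
    (heven : ∀ j : ℕ, 1 ≤ j → ∀ t : ℝ, P (2*j+2) t = P (2*j+1) t - P (2*j) t) :
    ∀ (j : ℕ) (x : ℝ), T (2*j+2) x = 1 + (2*x^2-2) * (P (2*j+2) (2*x+2))^2 :=
  stmt4_general T hT0 hT1 hTrec P hP1 hP2 hodd heven
end

section
/- For every real $\beta>0$ and $\delta>0$, the function $Z(x)=\dfrac{\delta^\beta-|x|^\beta}{\delta^\beta+|x|^\beta}$ satisfies $-\Delta Z(x)=2\beta^2\,\dfrac{\delta^\beta\,|x|^{\beta-2}}{(\delta^\beta+|x|^\beta)^2}\,Z(x)$ for all $x\in\mathbb{R}^2\setminus\{0\}$. -/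
/-!
`Z` is radial, `Z x = φ (‖x‖ ^ 2)` with `φ s = (δ^β - s^(β/2)) / (δ^β + s^(β/2))`. For any
profile `g`, the Hessian of `y ↦ g (‖y‖ ^ 2)` at `x` is `2 g'(s) ⟪v, v⟫ + 4 g''(s) ⟪x, v⟫²` with
`s = ‖x‖ ^ 2`, so tracing it over an orthonormal basis of an `n`-dimensional space gives
`Δ (g ∘ ‖·‖²) x = 2 n g'(s) + 4 s g''(s)`. For `n = 2` and `g = φ` this rational expression in
`s^(β/2)` factors as `-2 β² δ^β ‖x‖^(β-2) / (δ^β + ‖x‖^β)² · Z x`.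
-/

open Real InnerProductSpace Filter Topology
open scoped RealInnerProductSpace
open Laplacian

section RadialFunction

variable {E : Type*} [NormedAddCommGroup E] [InnerProductSpace ℝ E]

theorem HasDerivAt.hasFDerivAt_comp_norm_sq {g : ℝ → ℝ} {g' : ℝ} {x : E}
    (hg : HasDerivAt g g' (‖x‖ ^ 2)) :
    HasFDerivAt (fun y => g (‖y‖ ^ 2)) ((2 * g') • innerSL ℝ x) x :=
  (hg.comp_hasFDerivAt x (hasStrictFDerivAt_norm_sq x).hasFDerivAt).congr_fderiv (by module)

theorem iteratedFDeriv_two_comp_norm_sq_apply {g g' : ℝ → ℝ} {g'' : ℝ} {x : E}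
    (hg : ∀ᶠ s in 𝓝 (‖x‖ ^ 2), HasDerivAt g (g' s) s) (hg' : HasDerivAt g' g'' (‖x‖ ^ 2))
    (v : E) :
    iteratedFDeriv ℝ 2 (fun y => g (‖y‖ ^ 2)) x ![v, v] =
      2 * g' (‖x‖ ^ 2) * ‖v‖ ^ 2 + 4 * g'' * ⟪x, v⟫ ^ 2 := by
  have hgrad : fderiv ℝ (fun y => g (‖y‖ ^ 2)) =ᶠ[𝓝 x]
      fun y => (2 * g' (‖y‖ ^ 2)) • innerSL ℝ y := by
    have hcont : ContinuousAt (fun y : E => ‖y‖ ^ 2) x := by fun_prop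
    filter_upwards [hcont.eventually hg] with y hy
    exact hy.hasFDerivAt_comp_norm_sq.fderiv
  have hcoef : HasFDerivAt (fun y : E => 2 * g' (‖y‖ ^ 2)) ((4 * g'') • innerSL ℝ x) x :=
    (hg'.hasFDerivAt_comp_norm_sq.const_mul 2).congr_fderiv (by module)
  have hhess : HasFDerivAt (fun y => (2 * g' (‖y‖ ^ 2)) • innerSL ℝ y) _ x :=
    hcoef.smul (innerSL ℝ).hasFDerivAt
  rw [iteratedFDeriv_two_apply, hgrad.fderiv_eq, hhess.fderiv]
  have hvv : innerSL ℝ v v = ‖v‖ ^ 2 := real_inner_self_eq_norm_sq v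
  simp only [Matrix.cons_val_zero, Matrix.cons_val_one, Matrix.cons_val_fin_one,
    add_apply, smul_apply, ContinuousLinearMap.smulRight_apply, coe_innerSL_apply, smul_eq_mul, hvv]
  ring

theorem laplacian_comp_norm_sq [FiniteDimensional ℝ E] {g g' : ℝ → ℝ} {g'' : ℝ} {x : E}
    (hg : ∀ᶠ s in 𝓝 (‖x‖ ^ 2), HasDerivAt g (g' s) s) (hg' : HasDerivAt g' g'' (‖x‖ ^ 2)) :
    Δ (fun y : E => g (‖y‖ ^ 2)) x =
      2 * Module.finrank ℝ E * g' (‖x‖ ^ 2) + 4 * ‖x‖ ^ 2 * g'' := by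
  set b := stdOrthonormalBasis ℝ E
  rw [laplacian_eq_iteratedFDeriv_orthonormalBasis _ b]
  simp only [iteratedFDeriv_two_comp_norm_sq_apply hg hg', Finset.sum_add_distrib,
    ← Finset.mul_sum, b.sum_sq_inner_left, b.orthonormal.1, one_pow, Finset.sum_const,
    Finset.card_univ, Fintype.card_fin, nsmul_eq_mul, mul_one]
  ring

end RadialFunction

section Profile

variable {a : ℝ} (c : ℝ)

theorem hasDerivAt_rpow_const_of_pos {s : ℝ} (hs : 0 < s) :
    HasDerivAt (fun s : ℝ => s ^ c) (c * s ^ c / s) s := by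
  convert hasDerivAt_rpow_const (p := c) (Or.inl hs.ne') using 1
  rw [rpow_sub hs, rpow_one]
  ring

theorem hasDerivAt_sub_rpow_div_add_rpow (ha : 0 < a) {s : ℝ} (hs : 0 < s) :
    HasDerivAt (fun s : ℝ => (a - s ^ c) / (a + s ^ c))
      (-2 * a * c * s ^ c / (s * (a + s ^ c) ^ 2)) s := by
  have hden : 0 < a + s ^ c := by positivity
  have hu := hasDerivAt_rpow_const_of_pos c hs
  refine (((hasDerivAt_const s a).sub hu).div ((hasDerivAt_const s a).add hu)
    hden.ne').congr_deriv ?_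
  simp only [Pi.add_apply, Pi.sub_apply]
  field_simp
  ring

theorem hasDerivAt_deriv_sub_rpow_div_add_rpow (ha : 0 < a) {s : ℝ} (hs : 0 < s) :
    HasDerivAt (fun s : ℝ => -2 * a * c * s ^ c / (s * (a + s ^ c) ^ 2))
      (-2 * a * c * s ^ c * ((c - 1) * (a + s ^ c) - 2 * c * s ^ c) / (s ^ 2 * (a + s ^ c) ^ 3))
      s := by
  have hden : s * (a + s ^ c) ^ 2 ≠ 0 := by positivity
  have hu := hasDerivAt_rpow_const_of_pos c hs
  refine ((hu.const_mul (-2 * a * c)).div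
    ((hasDerivAt_id s).mul (((hasDerivAt_const s a).add hu).pow 2)) hden).congr_deriv ?_
  simp only [Pi.add_apply, Pi.mul_apply, Pi.pow_apply, id]
  field_simp
  ring

end Profile

theorem stmt16_general (β δ : ℝ) (hδ : 0 < δ)
    (Z : EuclideanSpace ℝ (Fin 2) → ℝ)
    (hZ : ∀ x : EuclideanSpace ℝ (Fin 2),
      Z x = (δ^β - ‖x‖^β)/(δ^β + ‖x‖^β)) :
    ∀ x : EuclideanSpace ℝ (Fin 2), x ≠ 0 →
      -(∑ i : Fin 2, iteratedFDeriv ℝ 2 Z x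
          ![EuclideanSpace.single i 1, EuclideanSpace.single i 1]) =
        2*β^2 * (δ^β * ‖x‖^(β-2) / (δ^β + ‖x‖^β)^2) * Z x := by
  intro x hx
  have ha : 0 < δ ^ β := rpow_pos_of_pos hδ β
  have hr : 0 < ‖x‖ := norm_pos_iff.mpr hx
  have hs : 0 < ‖x‖ ^ 2 := by positivity
  have hZ_radial : Z = fun y => (δ ^ β - (‖y‖ ^ 2) ^ (β / 2)) / (δ ^ β + (‖y‖ ^ 2) ^ (β / 2)) :=
    funext fun y => by rw [hZ, rpow_div_two_eq_sqrt β (by positivity), sqrt_sq (norm_nonneg y)]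
  have hlap : ∑ i : Fin 2, iteratedFDeriv ℝ 2 Z x
      ![EuclideanSpace.single i 1, EuclideanSpace.single i 1] = Δ Z x := by
    simp [laplacian_eq_iteratedFDeriv_orthonormalBasis Z (EuclideanSpace.basisFun (Fin 2) ℝ)]
  rw [hlap, hZ_radial, laplacian_comp_norm_sq
    (eventually_of_mem (Ioi_mem_nhds hs) fun s hs => hasDerivAt_sub_rpow_div_add_rpow _ ha hs)
    (hasDerivAt_deriv_sub_rpow_div_add_rpow _ ha hs), finrank_euclideanSpace_fin]
  beta_reduce
  rw [rpow_div_two_eq_sqrt β hs.le, sqrt_sq hr.le, rpow_sub hr, rpow_two]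
  field_simp
  ring

theorem stmt16 (β δ : ℝ) (hβ : 0 < β) (hδ : 0 < δ)
    (Z : EuclideanSpace ℝ (Fin 2) → ℝ)
    (hZ : ∀ x : EuclideanSpace ℝ (Fin 2),
      Z x = (δ^β - ‖x‖^β)/(δ^β + ‖x‖^β)) :
    ∀ x : EuclideanSpace ℝ (Fin 2), x ≠ 0 →
      -(∑ i : Fin 2, iteratedFDeriv ℝ 2 Z x
          ![EuclideanSpace.single i 1, EuclideanSpace.single i 1]) =
        2*β^2 * (δ^β * ‖x‖^(β-2) / (δ^β + ‖x‖^β)^2) * Z x :=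
  stmt16_general β δ hδ Z hZ
end

section
/- For every real $\beta>0$: $\displaystyle\int_{\mathbb{R}^2}2\beta^2\,\frac{|y|^{\beta-2}}{(1+|y|^{\beta})^{2}}\,\frac{1-|y|^{\beta}}{1+|y|^{\beta}}\,\log\bigl(1+|y|^{\beta}\bigr)\,dy=-2\pi\beta$. -/
/-!
In polar coordinates, followed by the substitution `u = r ^ β`, the integral becomes
`4πβ ∫₀^∞ (1 - u) / (1 + u) ^ 3 * log (1 + u) du`. The one-dimensional integrand has an
elementary primitive, equal to `1/2` at `0` and tending to `0` at infinity, so the integral is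
`-1/2`. Integrability comes for free
on `[1, ∞)`, where the integrand is nonpositive and its primitive converges.
-/

open Real Set MeasureTheory Filter Topology

theorem EuclideanSpace.integral_fun_norm_fin_two {F : Type*} [NormedAddCommGroup F]
    [NormedSpace ℝ F] (f : ℝ → F) :
    ∫ y : EuclideanSpace ℝ (Fin 2), f ‖y‖ = (2 * π) • ∫ r in Ioi (0 : ℝ), r • f r := by
  rw [integral_fun_norm_addHaar volume f, finrank_euclideanSpace_fin, measureReal_def,
    EuclideanSpace.volume_ball_fin_two]
  simp [ENNReal.toReal_ofReal pi_nonneg, mul_smul, ofNat_smul_eq_nsmul]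

theorem EuclideanSpace.integral_rpow_sub_two_smul_comp_rpow_fin_two {F : Type*}
    [NormedAddCommGroup F] [NormedSpace ℝ F] {p : ℝ} (hp : 0 < p) (g : ℝ → F) :
    ∫ y : EuclideanSpace ℝ (Fin 2), (p * ‖y‖ ^ (p - 2)) • g (‖y‖ ^ p)
      = (2 * π) • ∫ u in Ioi (0 : ℝ), g u := by
  rw [integral_fun_norm_fin_two (fun r => (p * r ^ (p - 2)) • g (r ^ p)),
    ← integral_comp_rpow_Ioi_of_pos (g := g) hp]
  congr 1
  refine setIntegral_congr_fun measurableSet_Ioi fun r (hr : 0 < r) => ?_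
  rw [smul_smul, show p - 1 = 1 + (p - 2) by ring, rpow_add hr, rpow_one]
  ring_nf

noncomputable def logKernel (u : ℝ) : ℝ := (1 - u) / (1 + u) ^ 3 * log (1 + u)

noncomputable def logKernelPrimitive (u : ℝ) : ℝ :=
  log (1 + u) * u / (1 + u) ^ 2 + (1 + 2 * u) / (2 * (1 + u) ^ 2)

theorem continuousAt_logKernel {u : ℝ} (hu : -1 < u) : ContinuousAt logKernel u := by
  have ht : 1 + u ≠ 0 := by linarith
  unfold logKernel
  fun_prop (disch := simp [ht])

theorem hasDerivAt_logKernelPrimitive {u : ℝ} (hu : -1 < u) :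
    HasDerivAt logKernelPrimitive (logKernel u) u := by
  have ht : 1 + u ≠ 0 := by linarith
  have hlog : HasDerivAt (fun v => log (1 + v)) (1 + u)⁻¹ u := by
    simpa using ((hasDerivAt_id u).const_add 1).log ht
  have hsq : HasDerivAt (fun v : ℝ => (1 + v) ^ 2) (2 * (1 + u)) u := by
    simpa using ((hasDerivAt_id u).const_add 1).fun_pow 2
  have := ((hlog.fun_mul (hasDerivAt_id' u)).fun_div hsq (pow_ne_zero 2 ht)).fun_add
    ((((hasDerivAt_id' u).const_mul 2).const_add 1).fun_div (hsq.const_mul 2) (by positivity))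
  refine this.congr_deriv ?_
  rw [logKernel]
  field_simp
  ring

theorem tendsto_logKernelPrimitive_atTop : Tendsto logKernelPrimitive atTop (𝓝 0) := by
  have hlog : Tendsto (fun t => log t / t) atTop (𝓝 0) :=
    isLittleO_log_id_atTop.tendsto_div_nhds_zero
  have hinv : Tendsto (fun t : ℝ => t⁻¹) atTop (𝓝 0) := tendsto_inv_atTop_zero
  have key : Tendsto (fun t => log t / t * (1 - t⁻¹) + t⁻¹ * (1 - t⁻¹ / 2)) atTop (𝓝 0) := by
    simpa using (hlog.mul (hinv.const_sub 1)).add (hinv.mul ((hinv.div_const 2).const_sub 1))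
  refine (key.comp (tendsto_atTop_add_const_left _ 1 tendsto_id)).congr' ?_
  filter_upwards [eventually_gt_atTop 0] with u hu
  simp only [Function.comp, id, logKernelPrimitive]
  field_simp
  ring

theorem integrableOn_logKernel : IntegrableOn logKernel (Ioi 0) := by
  rw [← Ioc_union_Ioi_eq_Ioi zero_le_one]
  refine IntegrableOn.union ?_ ?_
  · refine (ContinuousOn.integrableOn_Icc fun u hu => ?_).mono_set Ioc_subset_Icc_self
    exact (continuousAt_logKernel (by linarith [hu.1])).continuousWithinAt
  · refine integrableOn_Ioi_deriv_of_nonpos'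
      (fun u hu => hasDerivAt_logKernelPrimitive (by linarith [hu.out]))
      (fun u hu => ?_) tendsto_logKernelPrimitive_atTop
    have hu : (1 : ℝ) < u := hu
    exact mul_nonpos_of_nonpos_of_nonneg (div_nonpos_of_nonpos_of_nonneg (by linarith)
      (by positivity)) (log_nonneg (by linarith))

theorem integral_Ioi_logKernel : ∫ u in Ioi (0 : ℝ), logKernel u = -1 / 2 := by
  rw [integral_Ioi_of_hasDerivAt_of_tendsto'
    (fun u hu => hasDerivAt_logKernelPrimitive (by linarith [hu.out]))
    integrableOn_logKernel tendsto_logKernelPrimitive_atTop]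
  norm_num [logKernelPrimitive]

theorem stmt17 (β : ℝ) (hβ : 0 < β) :
    ∫ y : EuclideanSpace ℝ (Fin 2),
      2*β^2 * (‖y‖^(β-2) / (1 + ‖y‖^β)^2) * ((1 - ‖y‖^β)/(1 + ‖y‖^β))
        * Real.log (1 + ‖y‖^β) = -2*Real.pi*β := by
  have hintegrand : ∀ y : EuclideanSpace ℝ (Fin 2),
      2*β^2 * (‖y‖^(β-2) / (1 + ‖y‖^β)^2) * ((1 - ‖y‖^β)/(1 + ‖y‖^β)) * Real.log (1 + ‖y‖^β)
        = 2 * β * ((β * ‖y‖ ^ (β - 2)) • logKernel (‖y‖ ^ β)) := fun y => by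
    have : 0 < 1 + ‖y‖ ^ β := by positivity
    rw [smul_eq_mul, logKernel]
    field_simp
  simp_rw [hintegrand]
  rw [integral_const_mul, EuclideanSpace.integral_rpow_sub_two_smul_comp_rpow_fin_two hβ,
    integral_Ioi_logKernel, smul_eq_mul]
  ring
end
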